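/- Let X be a metric space, O_r, O_p ∈ X, r ≥ 0, Q a nonempty finite set of points of X, m a natural number with 1 ≤ m ≤ Q.card, and p* ∈ X a candidate point. If min over subsets S ⊆ Q with S.card = m of max_{q ∈ S} (|dist(O_p, q) − dist(O_p, O_r)| − r) is strictly greater than min over subsets S with S.card = m of max_{q ∈ S} dist(p*, q), then for every x with dist(x, O_r) ≤ r, min over subsets S with S.card = m of max_{q ∈ S} dist(x, q) is strictly greater than min over subsets S with S.card = m of max_{q ∈ S} dist(p*, q). -/
import Mathlib


/-- Flexible aggregate (sum) value: the minimum, over all subsets `S ⊆ Q` with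
`S.card = m`, of `∑ q ∈ S, f q`. -/
noncomputable def flexMinSum {X : Type*} (Q : Finset X) (m : ℕ)
    (h : (Q.powersetCard m).Nonempty) (f : X → ℝ) : ℝ :=
  (Q.powersetCard m).inf' h fun S => ∑ q ∈ S, f q

/-- Flexible aggregate (max) value: the minimum, over all subsets `S ⊆ Q` with
`S.card = m`, of `max_{q ∈ S} f q`. -/
noncomputable def flexMinMax {X : Type*} (Q : Finset X) (m : ℕ)
    (h : (Q.powersetCard m).Nonempty) (f : X → ℝ) : ℝ :=
  (Q.powersetCard m).inf' h fun S => sSup (f '' (S : Set X))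

lemma flexMinMax_mono {X : Type*} (Q : Finset X) (m : ℕ) (hm1 : 1 ≤ m)
    (h : (Q.powersetCard m).Nonempty) (f g : X → ℝ) (hfg : ∀ q, f q ≤ g q) :
    flexMinMax Q m h f ≤ flexMinMax Q m h g := by
  unfold flexMinMax
  apply Finset.le_inf'
  intro S hS
  refine le_trans (Finset.inf'_le (fun (S : Finset X) => sSup (f '' (S:Set X))) hS) ?_
  rw [Finset.mem_powersetCard] at hS
  have hSne : S.Nonempty := Finset.card_pos.mp (hS.2 ▸ hm1)
  rw [← Finset.sup'_eq_csSup_image S hSne f, ← Finset.sup'_eq_csSup_image S hSne g]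
  exact Finset.sup'_mono_fun fun q _ => hfg q

/-- No-false-drop (line 7, max aggregate): if the cheap bound `e'.G_φ` exceeds the
candidate FANN distance, then every object inside the region has FANN distance strictly
exceeding that of the candidate `p*`. -/
theorem no_false_drop_Gphi_max {X : Type*} [MetricSpace X] (Or Op : X) (r : ℝ) (hr : 0 ≤ r)
    (Q : Finset X) (hQ : Q.Nonempty) (m : ℕ) (hm1 : 1 ≤ m) (hm2 : m ≤ Q.card) (pstar : X)
    (h : flexMinMax Q m (Finset.powersetCard_nonempty.mpr hm2) (fun q => dist pstar q) <
      flexMinMax Q m (Finset.powersetCard_nonempty.mpr hm2)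
        (fun q => |dist Op q - dist Op Or| - r)) :
    ∀ x : X, dist x Or ≤ r →
      flexMinMax Q m (Finset.powersetCard_nonempty.mpr hm2) (fun q => dist pstar q) <
        flexMinMax Q m (Finset.powersetCard_nonempty.mpr hm2) (fun q => dist x q) := by
  intro x hx
  refine lt_of_lt_of_le h (flexMinMax_mono _ _ hm1 _ _ _ fun q => ?_)
  have h1 : |dist Op q - dist Op Or| ≤ dist Or q := by
    have := abs_dist_sub_le q Or Op
    rw [dist_comm Op q, dist_comm Op Or, dist_comm Or q]
    simpa [abs_sub_comm] using this
  have h2 : dist Or q ≤ dist x Or + dist x q := dist_triangle_left Or q x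
  linarith
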